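/- Let η be a substitution over A, p ≥ 1, x ∈ A, and n, n' ∈ {0,1,…,|η^p(x)|−1}. Then (i) n = n' if and only if tail_{η,p,x}(n) = tail_{η,p,x}(n'), and (ii) n < n' if and only if tail_{η,p,x}(n) is lexicographically strictly smaller than tail_{η,p,x}(n') (as words of equal length p over the ordered digit alphabet). -/
import Mathlib


open Filter List

variable {A : Type*}

/-- A substitution applied to a word: concatenation of the images of its letters. -/
def substW (η : A → List A) (w : List A) : List A := (w.map η).flatten

/-- The `k`-th iterate of a substitution applied to a word. -/
def iterW (η : A → List A) (k : ℕ) (w : List A) : List A := (substW η)^[k] w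

/-- `η` is a substitution: nonempty images and at least one growing letter. -/
def IsSubstitution (η : A → List A) : Prop :=
  (∀ c, η c ≠ []) ∧ ∃ a, Tendsto (fun k => (iterW η k [a]).length) atTop atTop

/-- `(m i, a i)` for `i = 0, …, len-1` is an `x`-admissible sequence:
`m (i) ++ [a i]` is a prefix of `η (a (i+1))` and `m (len-1) ++ [a (len-1)]`
is a prefix of `η x`. -/
def AdmSeq (η : A → List A) (len : ℕ) (m : ℕ → List A) (a : ℕ → A) (x : A) : Prop :=
  (∀ i, i + 1 < len → (m i ++ [a i]) <+: η (a (i + 1))) ∧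
  (1 ≤ len → (m (len - 1) ++ [a (len - 1)]) <+: η x)

/-- `Σ_{j<k} |η^j(m_j)|`. -/
def sumLen (η : A → List A) (k : ℕ) (m : ℕ → List A) : ℕ :=
  ∑ j ∈ Finset.range k, (iterW η j (m j)).length

/-- `η^{k-1}(m_{k-1}) η^{k-2}(m_{k-2}) ⋯ η^0(m_0)`. -/
def concatDT (η : A → List A) (k : ℕ) (m : ℕ → List A) : List A :=
  ((List.range k).reverse.map (fun j => iterW η j (m j))).flatten

/-- The digit word `|m_{k-1}| ⊙ |m_{k-2}| ⊙ ⋯ ⊙ |m_0|`. -/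
def dtDigits (k : ℕ) (m : ℕ → List A) : List ℕ :=
  (List.range k).reverse.map (fun j => (m j).length)

/-- Partial run of the automaton `A_{η,x}`: from state `x`, the digit `d`
moves to the `d`-th letter of `η x` when `d < |η x|`. -/
def run (η : A → List A) : List ℕ → A → Option A
  | [], x => some x
  | d :: w, x => if h : d < (η x).length then run η w ((η x)[d]) else none

/-- `u` restricted to nonnegative positions is a periodic point of `η` of period `p`:
every `η^p`-image of a prefix of `u` is again a prefix of `u`. -/
def RightPer (η : A → List A) (p : ℕ) (u : ℤ → A) : Prop :=
  ∀ n : ℕ, ∀ j : ℕ, j < (iterW η p (List.ofFn (fun i : Fin (n+1) => u i))).length →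
    (iterW η p (List.ofFn (fun i : Fin (n+1) => u i)))[j]? = some (u j)

/-- `u` restricted to negative positions is a periodic point of `η` of period `p`:
every `η^p`-image of a suffix `u_{-(n+1)} ⋯ u_{-1}` of the left part is again a
suffix of the left part of `u`. -/
def LeftPer (η : A → List A) (p : ℕ) (u : ℤ → A) : Prop :=
  ∀ n : ℕ, ∀ j : ℕ,
    j < (iterW η p (List.ofFn (fun i : Fin (n+1) => u ((i : ℤ) - (n+1))))).length →
    (iterW η p (List.ofFn (fun i : Fin (n+1) => u ((i : ℤ) - (n+1)))))[j]? =
      some (u ((j : ℤ) -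
        (iterW η p (List.ofFn (fun i : Fin (n+1) => u ((i : ℤ) - (n+1))))).length))

/-- `u : ℤ → A` is a two-sided periodic point of `η` of period `p ≥ 1` with
growing seed `u₋₁ | u₀`. -/
def TwoSidedPerPoint (η : A → List A) (p : ℕ) (u : ℤ → A) : Prop :=
  1 ≤ p ∧ RightPer η p u ∧ LeftPer η p u ∧
  Tendsto (fun k => (iterW η k [u 0]).length) atTop atTop ∧
  Tendsto (fun k => (iterW η k [u (-1)]).length) atTop atTop

/-- The Dumont–Thomas decomposition data of a positive integer `n` with respect to
the letter `x` (Theorem of Dumont–Thomas for the right-infinite part):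
`p ∣ k`, `p ≤ k`, the sequence is `x`-admissible, `m_{k-1} ⋯ m_{k-p} ≠ ε` and
`Σ_{j<k} |η^j(m_j)| = n`. -/
def PosSpec (η : A → List A) (p : ℕ) (x : A) (n : ℤ) (k : ℕ) (m : ℕ → List A)
    (a : ℕ → A) : Prop :=
  p ∣ k ∧ p ≤ k ∧ AdmSeq η k m a x ∧ (∃ i, i < p ∧ m (k - 1 - i) ≠ []) ∧
  (sumLen η k m : ℤ) = n

/-- The Dumont–Thomas decomposition data of an integer `n ≤ -2` with respect to
the letter `b` (Theorem of Dumont–Thomas for the left-infinite part). -/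
def NegSpec (η : A → List A) (p : ℕ) (b : A) (n : ℤ) (k : ℕ) (m : ℕ → List A)
    (a : ℕ → A) : Prop :=
  p ∣ k ∧ p ≤ k ∧ AdmSeq η k m a b ∧
  ((List.range p).map (fun i => iterW η (p - 1 - i) (m (k - 1 - i)))).flatten
      ++ [a (k - p)] ≠ iterW η p [b] ∧
  (sumLen η k m : ℤ) = n + (iterW η k [b]).length

/-- `w` is the Dumont–Thomas complement representation `rep_u(n)` of `n ∈ ℤ`. -/
def RepSpec (η : A → List A) (p : ℕ) (u : ℤ → A) (n : ℤ) (w : List ℕ) : Prop :=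
  (n = 0 ∧ w = [0]) ∨ (n = -1 ∧ w = [1]) ∨
  (1 ≤ n ∧ ∃ k m a, PosSpec η p (u 0) n k m a ∧ w = 0 :: dtDigits k m) ∨
  (n ≤ -2 ∧ ∃ k m a, NegSpec η p (u (-1)) n k m a ∧ w = 1 :: dtDigits k m)

/-- Run of the automaton `A_{η,s}` with initial state `start`: the first digit
`0` (resp. `1`) moves to `u 0` (resp. `u (-1)`). -/
def runSeed (η : A → List A) (u : ℤ → A) : List ℕ → Option A
  | [] => none
  | d :: w => if d = 0 then run η w (u 0) else if d = 1 then run η w (u (-1)) else none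

/-- `|η^{k-p-1}(m_{k-1}) ⋯ η^0(m_p)|`, the `u`-quotient of a positive integer. -/
def uQuotPos (η : A → List A) (p k : ℕ) (m : ℕ → List A) : ℤ :=
  ∑ j ∈ Finset.range (k - p), ((iterW η j (m (j + p))).length : ℤ)

/-- `w = tail_{η,p,x}(n)`: the digit word of the unique `x`-admissible sequence of
length `p` whose length-sum is `n`. -/
def TailSpec (η : A → List A) (p : ℕ) (x : A) (n : ℕ) (w : List ℕ) : Prop :=
  ∃ m a, AdmSeq η p m a x ∧ sumLen η p m = n ∧ w = dtDigits p m

/-- Radix order: shorter words first, ties broken lexicographically. -/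
def radLt (v w : List ℕ) : Prop :=
  v.length < w.length ∨ (v.length = w.length ∧ List.Lex (· < ·) v w)

/-- Reversed-radix order: longer words first, ties broken lexicographically. -/
def revLt (v w : List ℕ) : Prop :=
  w.length < v.length ∨ (v.length = w.length ∧ List.Lex (· < ·) v w)

/-- The total order `≺` on `{0,1}D*`. -/
def precLt (v w : List ℕ) : Prop :=
  (v.head? = some 1 ∧ w.head? = some 0) ∨
  (v.head? = some 0 ∧ w.head? = some 0 ∧ radLt v w) ∨
  (v.head? = some 1 ∧ w.head? = some 1 ∧ revLt v w)

/-- The base-2 value `Σ_{i<k} w_i 2^i` of the word `w = w_{k-1} ⋯ w_0`. -/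
def natVal2 (w : List ℕ) : ℕ := w.foldl (fun acc d => 2 * acc + d) 0

/-- The two's complement value `Σ_{i<k} w_i 2^i − w_{k-1} 2^k`. -/
def val2c (w : List ℕ) : ℤ := (natVal2 w : ℤ) - (w.headI : ℤ) * 2 ^ w.length

/-- Fibonacci numbers with `F 0 = 1`, `F 1 = 2`. -/
def fib2 : ℕ → ℕ
  | 0 => 1
  | 1 => 2
  | n + 2 => fib2 (n + 1) + fib2 n

/-- The Fibonacci complement value `Σ_{i<k} w_i F_i − w_{k-1} F_k`
of the word `w = w_{k-1} ⋯ w_0`. -/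
def valFc (w : List ℕ) : ℤ :=
  (∑ i ∈ Finset.range w.length, (w.reverse.getD i 0 : ℤ) * fib2 i) -
    (w.headI : ℤ) * fib2 w.length


section TailAux

lemma substW_append' (η : A → List A) (u v : List A) :
    substW η (u ++ v) = substW η u ++ substW η v := by
  simp [substW]

lemma iterW_succ' (η : A → List A) (k : ℕ) (w : List A) :
    iterW η (k+1) w = iterW η k (substW η w) := by
  simp [iterW, Function.iterate_succ_apply]

lemma iterW_append' (η : A → List A) (k : ℕ) (u v : List A) :
    iterW η k (u ++ v) = iterW η k u ++ iterW η k v := by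
  induction k generalizing u v with
  | zero => simp [iterW]
  | succ k ih => rw [iterW_succ', substW_append', ih, iterW_succ', iterW_succ']

lemma substW_singleton' (η : A → List A) (x : A) : substW η [x] = η x := by
  simp [substW]

lemma sumLen_succ' (η : A → List A) (p : ℕ) (m : ℕ → List A) :
    sumLen η (p+1) m = sumLen η p m + (iterW η p (m p)).length :=
  Finset.sum_range_succ _ _

lemma dtDigits_succ' (p : ℕ) (m : ℕ → List A) :
    dtDigits (p+1) m = (m p).length :: dtDigits p m := by
  simp [dtDigits, List.range_succ]

lemma adm_restrict' (η : A → List A) (p : ℕ) (m : ℕ → List A) (a : ℕ → A) (x : A)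
    (h : AdmSeq η (p+1) m a x) : AdmSeq η p m a (a p) := by
  constructor
  · intro i hi; exact h.1 i (by omega)
  · intro hp
    have h2 := h.1 (p-1) (by omega)
    have hp' : p - 1 + 1 = p := by omega
    rwa [hp'] at h2

lemma adm_top' (η : A → List A) (p : ℕ) (m : ℕ → List A) (a : ℕ → A) (x : A)
    (h : AdmSeq η (p+1) m a x) : m p ++ [a p] <+: η x := by
  have h2 := h.2 (by omega)
  simpa using h2

lemma sum_lt' (η : A → List A) :
    ∀ p (m : ℕ → List A) (a : ℕ → A) (x : A), AdmSeq η p m a x →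
      sumLen η p m < (iterW η p [x]).length := by
  intro p
  induction p with
  | zero => intro m a x _; simp [sumLen, iterW]
  | succ p ih =>
    intro m a x h
    have hrec := ih m a (a p) (adm_restrict' η p m a x h)
    obtain ⟨t, ht⟩ := adm_top' η p m a x h
    have hx : iterW η (p+1) [x]
        = iterW η p (m p) ++ iterW η p [a p] ++ iterW η p t := by
      rw [iterW_succ', substW_singleton', ← ht, iterW_append', iterW_append']
    rw [sumLen_succ', hx]
    simp only [List.length_append]
    omega

lemma head_eq' (η : A → List A) (p : ℕ) (m : ℕ → List A) (a : ℕ → A)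
    (m' : ℕ → List A) (a' : ℕ → A) (x : A)
    (h : AdmSeq η (p+1) m a x) (h' : AdmSeq η (p+1) m' a' x)
    (hl : (m p).length = (m' p).length) : m p = m' p ∧ a p = a' p := by
  have pm := adm_top' η p m a x h
  have pm' := adm_top' η p m' a' x h'
  have hpre : m p ++ [a p] <+: m' p ++ [a' p] :=
    List.prefix_of_prefix_length_le pm pm' (by simp [hl])
  have heq : m p ++ [a p] = m' p ++ [a' p] :=
    List.IsPrefix.eq_of_length hpre (by simp [hl])
  obtain ⟨h1, h2⟩ := List.append_inj heq hl
  exact ⟨h1, by simpa using h2⟩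

lemma lex_sum_lt' (η : A → List A) :
    ∀ p (m : ℕ → List A) (a : ℕ → A) (m' : ℕ → List A) (a' : ℕ → A) (x : A),
      AdmSeq η p m a x → AdmSeq η p m' a' x →
      List.Lex (· < ·) (dtDigits p m) (dtDigits p m') →
      sumLen η p m < sumLen η p m' := by
  intro p
  induction p with
  | zero => intro m a m' a' x _ _ hlex; simp [dtDigits] at hlex
  | succ p ih =>
    intro m a m' a' x h h' hlex
    rw [dtDigits_succ', dtDigits_succ'] at hlex
    have inv : ∀ (d d' : ℕ) (ds ds' : List ℕ), List.Lex (· < ·) (d::ds) (d'::ds') →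
        d < d' ∨ (d = d' ∧ List.Lex (· < ·) ds ds') := by
      intro d d' ds ds' hh
      cases hh with
      | cons htail => exact Or.inr ⟨rfl, htail⟩
      | rel hrel => exact Or.inl hrel
    rcases inv _ _ _ _ hlex with hlt | ⟨heq, htail⟩
    · -- top digit strictly smaller
      have pm := adm_top' η p m a x h
      have pm' := adm_top' η p m' a' x h'
      have pm'' : m' p <+: η x := (((m' p).prefix_append [a' p])).trans pm'
      have hpre : m p ++ [a p] <+: m' p :=
        List.prefix_of_prefix_length_le pm pm'' (by simp; omega)
      obtain ⟨t, ht⟩ := hpre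
      have hlen : (iterW η p (m' p)).length =
          (iterW η p (m p)).length + (iterW η p [a p]).length + (iterW η p t).length := by
        rw [← ht, iterW_append', iterW_append']
        simp [List.length_append]
        omega
      have hrec : sumLen η p m < (iterW η p [a p]).length :=
        sum_lt' η p m a (a p) (adm_restrict' η p m a x h)
      rw [sumLen_succ', sumLen_succ']
      omega
    · -- equal top digits
      obtain ⟨hm, ha⟩ := head_eq' η p m a m' a' x h h' heq
      have h1 := adm_restrict' η p m a x h
      have h2 := adm_restrict' η p m' a' x h'
      rw [← ha] at h2
      have := ih m a m' a' (a p) h1 h2 htail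
      rw [sumLen_succ', sumLen_succ', hm]
      omega

lemma eq_sum_eq' (η : A → List A) :
    ∀ p (m : ℕ → List A) (a : ℕ → A) (m' : ℕ → List A) (a' : ℕ → A) (x : A),
      AdmSeq η p m a x → AdmSeq η p m' a' x →
      dtDigits p m = dtDigits p m' → sumLen η p m = sumLen η p m' := by
  intro p
  induction p with
  | zero => intro m a m' a' x _ _ _; simp [sumLen]
  | succ p ih =>
    intro m a m' a' x h h' hd
    rw [dtDigits_succ', dtDigits_succ'] at hd
    have h1 : (m p).length = (m' p).length := by injection hd
    have h2 : dtDigits p m = dtDigits p m' := by injection hd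
    obtain ⟨hm, ha⟩ := head_eq' η p m a m' a' x h h' h1
    have hr1 := adm_restrict' η p m a x h
    have hr2 := adm_restrict' η p m' a' x h'
    rw [← ha] at hr2
    have := ih m a m' a' (a p) hr1 hr2 h2
    rw [sumLen_succ', sumLen_succ', hm]
    omega

end TailAux

/-- For `n, n' < |η^p(x)|` with `tail` digit words coming from
admissible decompositions: `n = n'` iff the digit words are equal, and `n < n'`
iff `tail_{η,p,x}(n)` is lexicographically smaller than `tail_{η,p,x}(n')`. -/
theorem tail_order [Finite A] (η : A → List A) (hη : IsSubstitution η)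
    (p : ℕ) (hp : 1 ≤ p) (x : A) (n n' : ℕ)
    (hn : n < (iterW η p [x]).length) (hn' : n' < (iterW η p [x]).length)
    (m m' : ℕ → List A) (a a' : ℕ → A)
    (hadm : AdmSeq η p m a x) (hsum : sumLen η p m = n)
    (hadm' : AdmSeq η p m' a' x) (hsum' : sumLen η p m' = n') :
    (n = n' ↔ dtDigits p m = dtDigits p m') ∧
    (n < n' ↔ List.Lex (· < ·) (dtDigits p m) (dtDigits p m')) := by
  subst hsum hsum'
  constructor
  · constructor
    · intro h
      rcases trichotomous_of (List.Lex ((· < ·) : ℕ → ℕ → Prop)) (dtDigits p m) (dtDigits p m')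
        with hl | he | hl
      · exact absurd (lex_sum_lt' η p m a m' a' x hadm hadm' hl) (by omega)
      · exact he
      · exact absurd (lex_sum_lt' η p m' a' m a x hadm' hadm hl) (by omega)
    · intro h
      exact eq_sum_eq' η p m a m' a' x hadm hadm' h
  · constructor
    · intro h
      rcases trichotomous_of (List.Lex ((· < ·) : ℕ → ℕ → Prop)) (dtDigits p m) (dtDigits p m')
        with hl | he | hl
      · exact hl
      · exact absurd (eq_sum_eq' η p m a m' a' x hadm hadm' he) (by omega)
      · exact absurd (lex_sum_lt' η p m' a' m a x hadm' hadm hl) (by omega)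
    · intro h
      exact lex_sum_lt' η p m a m' a' x hadm hadm' h
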